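/- Let (F_k, m_k) be a DBM-sequence based on Supp ⊆ SL∪{*}, let k ∈ ℕ and φ ∈ SL. If ⊢_k φ (from the empty premise set), then B_k(φ) = 1, provided F_k is {φ}-maximal and free of deep contradictions. -/
import Mathlib


/-!
Common framework: Depth-Bounded Boolean Logics, depth-bounded trees/forests,
mass functions and depth-bounded belief functions.
-/

namespace DBB

/-- Sentences of a propositional language with propositional variables in `V`,
connectives ¬, ∧, ∨ and the constant ⊥. -/
inductive Sentence (V : Type) : Type
  | var  : V → Sentence V
  | bot  : Sentence V
  | neg  : Sentence V → Sentence V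
  | conj : Sentence V → Sentence V → Sentence V
  | disj : Sentence V → Sentence V → Sentence V
  deriving DecidableEq

variable {V : Type}

/-- Boolean evaluation of a sentence under a valuation of the variables. -/
def eval (v : V → Bool) : Sentence V → Bool
  | .var p => v p
  | .bot => false
  | .neg φ => !(eval v φ)
  | .conj φ ψ => eval v φ && eval v ψ
  | .disj φ ψ => eval v φ || eval v ψ

/-- Classical (semantic) consequence `Γ ⊢ φ`. -/
def CC (Γ : Set (Sentence V)) (φ : Sentence V) : Prop :=
  ∀ v : V → Bool, (∀ γ ∈ Γ, eval v γ = true) → eval v φ = true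

/-- The 0-depth consequence relation `Γ ⊢₀ φ`: closure of `Γ` under the standard
introduction and elimination rules for ¬, ∧, ∨, ⊥. -/
inductive Der0 : Set (Sentence V) → Sentence V → Prop
  | prem {Γ : Set (Sentence V)} {φ} (h : φ ∈ Γ) : Der0 Γ φ
  | andI {Γ φ ψ} : Der0 Γ φ → Der0 Γ ψ → Der0 Γ (.conj φ ψ)
  | andE1 {Γ φ ψ} : Der0 Γ (.conj φ ψ) → Der0 Γ φ
  | andE2 {Γ φ ψ} : Der0 Γ (.conj φ ψ) → Der0 Γ ψ
  | orI1 {Γ φ ψ} : Der0 Γ φ → Der0 Γ (.disj φ ψ)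
  | orI2 {Γ φ ψ} : Der0 Γ ψ → Der0 Γ (.disj φ ψ)
  | orE1 {Γ φ ψ} : Der0 Γ (.disj φ ψ) → Der0 Γ (.neg φ) → Der0 Γ ψ
  | orE2 {Γ φ ψ} : Der0 Γ (.disj φ ψ) → Der0 Γ (.neg ψ) → Der0 Γ φ
  | negAndI1 {Γ φ ψ} : Der0 Γ (.neg φ) → Der0 Γ (.neg (.conj φ ψ))
  | negAndI2 {Γ φ ψ} : Der0 Γ (.neg ψ) → Der0 Γ (.neg (.conj φ ψ))
  | negAndE1 {Γ φ ψ} : Der0 Γ (.neg (.conj φ ψ)) → Der0 Γ φ → Der0 Γ (.neg ψ)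
  | negAndE2 {Γ φ ψ} : Der0 Γ (.neg (.conj φ ψ)) → Der0 Γ ψ → Der0 Γ (.neg φ)
  | negOrI {Γ φ ψ} : Der0 Γ (.neg φ) → Der0 Γ (.neg ψ) → Der0 Γ (.neg (.disj φ ψ))
  | negOrE1 {Γ φ ψ} : Der0 Γ (.neg (.disj φ ψ)) → Der0 Γ (.neg φ)
  | negOrE2 {Γ φ ψ} : Der0 Γ (.neg (.disj φ ψ)) → Der0 Γ (.neg ψ)
  | dnI {Γ φ} : Der0 Γ φ → Der0 Γ (.neg (.neg φ))
  | dnE {Γ φ} : Der0 Γ (.neg (.neg φ)) → Der0 Γ φ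
  | botI {Γ φ} : Der0 Γ φ → Der0 Γ (.neg φ) → Der0 Γ .bot
  | botE {Γ φ} : Der0 Γ .bot → Der0 Γ φ

/-- The set of subsentences of a sentence. -/
def subs : Sentence V → Set (Sentence V)
  | .var p => {Sentence.var p}
  | .bot => {Sentence.bot}
  | .neg φ => insert (.neg φ) (subs φ)
  | .conj φ ψ => insert (.conj φ ψ) (subs φ ∪ subs ψ)
  | .disj φ ψ => insert (.disj φ ψ) (subs φ ∪ subs ψ)

/-- Subsentences of a set of sentences. -/
def subsSet (Γ : Set (Sentence V)) : Set (Sentence V) := ⋃ γ ∈ Γ, subs γ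

/-- The k-depth consequence relations `Γ ⊢ₖ φ`: for `k > 0`, `Γ ⊢ₖ φ` iff there is a
subsentence `β` of `Γ ∪ {φ}` such that `Γ, β ⊢_{k-1} φ` and `Γ, ¬β ⊢_{k-1} φ`. -/
def DerK : ℕ → Set (Sentence V) → Sentence V → Prop
  | 0, Γ, φ => Der0 Γ φ
  | k+1, Γ, φ => ∃ β, β ∈ subsSet (insert φ Γ) ∧
      DerK k (insert β Γ) φ ∧ DerK k (insert (Sentence.neg β) Γ) φ

/-- Elements of `SL ∪ {*}`: `none` is the empty information `*`, `some γ` is the sentence `γ`.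
`prems` gives the corresponding set of premises. -/
def prems : Option (Sentence V) → Set (Sentence V)
  | none => ∅
  | some γ => {γ}

/-- `r ⊢₀ φ` for `r ∈ SL ∪ {*}`. -/
def Der0O (r : Option (Sentence V)) (φ : Sentence V) : Prop := Der0 (prems r) φ

/-- `r ⊢ₖ φ` for `r ∈ SL ∪ {*}`. -/
def DerKO (k : ℕ) (r : Option (Sentence V)) (φ : Sentence V) : Prop := DerK k (prems r) φ

/-- classical consequence from `r ∈ SL ∪ {*}`. -/
def CCO (r : Option (Sentence V)) (φ : Sentence V) : Prop := CC (prems r) φ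

/-- `r ⊢₀ s` where also the conclusion may be the empty information `*`
(deriving `*` is trivial). -/
def Der0OO (r : Option (Sentence V)) : Option (Sentence V) → Prop
  | none => True
  | some φ => Der0O r φ

/-! ### Depth-bounded trees -/

/-- Binary trees whose internal nodes are labelled by the branching sentence `β`:
a node with branching sentence `β` and current information `α` has children carrying
the information `α ∧ β` and `α ∧ ¬β` respectively. -/
inductive DBTree (V : Type) : Type
  | leaf : DBTree V
  | node : Sentence V → DBTree V → DBTree V → DBTree V
  deriving DecidableEq

/-- The information carried by a child of a node with information `r ∈ SL ∪ {*}` and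
branching sentence `β`: `r ∧ β` (or just `β` when `r = *`). -/
def extend (r : Option (Sentence V)) (β : Sentence V) : Option (Sentence V) :=
  some (match r with
    | none => β
    | some α => Sentence.conj α β)

/-- The set `Le(T)` of labels of the leaves of a tree `t` rooted in `r ∈ SL ∪ {*}`. -/
def leafLabels [DecidableEq V] : Option (Sentence V) → DBTree V → Finset (Option (Sentence V))
  | r, .leaf => {r}
  | r, .node β t₁ t₂ =>
      leafLabels (extend r β) t₁ ∪ leafLabels (extend r (.neg β)) t₂

/-- The number of leaves of a tree. -/
def numLeaves : DBTree V → ℕ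
  | .leaf => 1
  | .node _ t₁ t₂ => numLeaves t₁ + numLeaves t₂

/-- `Grow k t t'`: `t'` is obtained from `t` by expanding a (possibly empty) subset of the
depth-`k` leaves of `t`, each expanded leaf getting two children via some branching sentence. -/
inductive Grow : ℕ → DBTree V → DBTree V → Prop
  | keep (k : ℕ) : Grow k .leaf .leaf
  | expand (β : Sentence V) : Grow 0 .leaf (.node β .leaf .leaf)
  | node {k : ℕ} {t₁ t₁' t₂ t₂' : DBTree V} (β : Sentence V) :
      Grow k t₁ t₁' → Grow k t₂ t₂' →
      Grow (k+1) (.node β t₁ t₂) (.node β t₁' t₂')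

/-- A depth-bounded tree sequence (DBT-sequence): `T₀` is a single node, and `T_{k+1}` is
obtained from `T_k` by branching at least one node of depth `k`. -/
structure DBTSeq (V : Type) where
  tree : ℕ → DBTree V
  init : tree 0 = DBTree.leaf
  grow : ∀ k, Grow k (tree k) (tree (k+1))
  progress : ∀ k, tree (k+1) ≠ tree k

/-- `t` is a tree of depth `k` belonging to some DBT-sequence. -/
def IsDepthKTree (k : ℕ) (t : DBTree V) : Prop := ∃ S : DBTSeq V, S.tree k = t

/-- `r` decides `φ`: `r ⊢₀ φ` or `r ⊢₀ ¬φ`. -/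
def Decides (r : Option (Sentence V)) (φ : Sentence V) : Prop :=
  Der0O r φ ∨ Der0O r (.neg φ)

/-- `|dec(Γ, φ)|`: the number of elements of `Γ` deciding `φ`. -/
noncomputable def decCount [DecidableEq V] (Γ : Finset (Option (Sentence V)))
    (φ : Sentence V) : ℕ := by
  classical exact (Γ.filter (fun α => Decides α φ)).card

/-- A tree rooted in `r` is `{φ}`-closed iff all its leaves decide `φ`. -/
def TreeClosed [DecidableEq V] (r : Option (Sentence V)) (t : DBTree V) (φ : Sentence V) : Prop :=
  ∀ α ∈ leafLabels r t, Decides α φ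

/-- A tree `t` of depth `k` rooted in `r` is `{φ}`-maximal iff no depth-`k` tree with the same
root has strictly more leaves deciding `φ`. -/
def TreeMaximal [DecidableEq V] (r : Option (Sentence V)) (k : ℕ) (t : DBTree V)
    (φ : Sentence V) : Prop :=
  ∀ t' : DBTree V, IsDepthKTree k t' →
    decCount (leafLabels r t') φ ≤ decCount (leafLabels r t) φ

/-- A tree rooted in `r` is free of deep contradictions iff every classically inconsistent
leaf is already 0-depth inconsistent. -/
def TreeFreeDC [DecidableEq V] (r : Option (Sentence V)) (t : DBTree V) : Prop :=
  ∀ α ∈ leafLabels r t, CCO α Sentence.bot → Der0O α Sentence.bot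

/-! ### Depth-bounded forests -/

/-- A depth-bounded forest sequence (DBF-sequence) based on the support set
`Supp ⊆ SL ∪ {*}`: a DBT-sequence rooted in `γ` for each `γ ∈ Supp`. -/
structure DBFSeq (V : Type) where
  Supp : Finset (Option (Sentence V))
  suppNE : Supp.Nonempty
  tree : Option (Sentence V) → ℕ → DBTree V
  init : ∀ γ ∈ Supp, tree γ 0 = DBTree.leaf
  grow : ∀ γ ∈ Supp, ∀ k, Grow k (tree γ k) (tree γ (k+1))
  progress : ∀ γ ∈ Supp, ∀ k, tree γ (k+1) ≠ tree γ k

/-- `Le(F_k)`: the leaves of the depth-`k` forest of a DBF-sequence. -/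
noncomputable def DBFSeq.leaves [DecidableEq V] (F : DBFSeq V) (k : ℕ) :
    Finset (Option (Sentence V)) := by
  classical exact F.Supp.biUnion (fun γ => leafLabels γ (F.tree γ k))

/-- The depth-`k` forest is `{φ}`-closed (tree-wise). -/
def DBFSeq.Closed [DecidableEq V] (F : DBFSeq V) (k : ℕ) (φ : Sentence V) : Prop :=
  ∀ γ ∈ F.Supp, TreeClosed γ (F.tree γ k) φ

/-- The depth-`k` forest is `{φ}`-maximal (tree-wise). -/
def DBFSeq.Maximal [DecidableEq V] (F : DBFSeq V) (k : ℕ) (φ : Sentence V) : Prop :=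
  ∀ γ ∈ F.Supp, TreeMaximal γ k (F.tree γ k) φ

/-- The depth-`k` forest is free of deep contradictions (tree-wise). -/
def DBFSeq.FreeDC [DecidableEq V] (F : DBFSeq V) (k : ℕ) : Prop :=
  ∀ γ ∈ F.Supp, TreeFreeDC γ (F.tree γ k)

/-- `MassStep m m' r t t'`: the mass function `m'` refines `m` along the expansion of `t`
into `t'` (leaves keep their mass; the mass of an expanded leaf is split among its
two children). -/
inductive MassStep (m m' : Option (Sentence V) → ℝ) :
    Option (Sentence V) → DBTree V → DBTree V → Prop
  | keep {r : Option (Sentence V)} :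
      m' r = m r → MassStep m m' r .leaf .leaf
  | split {r : Option (Sentence V)} {β : Sentence V} :
      m' (extend r β) + m' (extend r (.neg β)) = m r →
      MassStep m m' r .leaf (.node β .leaf .leaf)
  | node {r : Option (Sentence V)} {β : Sentence V} {t₁ t₁' t₂ t₂' : DBTree V} :
      MassStep m m' (extend r β) t₁ t₁' →
      MassStep m m' (extend r (.neg β)) t₂ t₂' →
      MassStep m m' r (.node β t₁ t₂) (.node β t₁' t₂')

/-- A depth-bounded mass sequence (DBM-sequence): a DBF-sequence free of deep contradictions
together with probability mass functions `m_k` over `Le(F_k)` such that the mass of each leaf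
of `F_k` is either kept (if it remains a leaf) or split among its two children in `F_{k+1}`. -/
structure DBMSeq (V : Type) [DecidableEq V] extends DBFSeq V where
  m : ℕ → Option (Sentence V) → ℝ
  nonneg : ∀ k, ∀ α ∈ toDBFSeq.leaves k, 0 ≤ m k α
  total : ∀ k, ∑ α ∈ toDBFSeq.leaves k, m k α = 1
  incZero : ∀ k, ∀ α ∈ toDBFSeq.leaves k, Der0O α Sentence.bot → m k α = 0
  freeDC : ∀ k, toDBFSeq.FreeDC k
  massStep : ∀ γ ∈ toDBFSeq.Supp, ∀ k,
      MassStep (m k) (m (k+1)) γ (toDBFSeq.tree γ k) (toDBFSeq.tree γ (k+1))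

/-- The k-depth belief function `B_k(φ) = m_k(b_k(φ))` where
`b_k(φ) = {α ∈ Le(F_k) : α ⊢₀ φ, α ⊬₀ ⊥}`. -/
noncomputable def DBMSeq.B [DecidableEq V] (M : DBMSeq V) (k : ℕ) (φ : Sentence V) : ℝ := by
  classical exact ∑ α ∈ M.toDBFSeq.leaves k,
    if Der0O α φ ∧ ¬ Der0O α Sentence.bot then M.m k α else 0

/-- The k-depth plausibility function `Pl_k(φ) = m_k(pl_k(φ))` where
`pl_k(φ) = {α ∈ Le(F_k) : α ⊬₀ ¬φ}`. -/
noncomputable def DBMSeq.Pl [DecidableEq V] (M : DBMSeq V) (k : ℕ) (φ : Sentence V) : ℝ := by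
  classical exact ∑ α ∈ M.toDBFSeq.leaves k,
    if ¬ Der0O α (Sentence.neg φ) then M.m k α else 0

/-! ### Auxiliary notions -/

/-- A probability function on `SL`: a `[0,1]`-valued function which is normalised on
classical tautologies and additive on classically incompatible disjuncts. -/
def IsProbability (P : Sentence V → ℝ) : Prop :=
  (∀ φ, 0 ≤ P φ ∧ P φ ≤ 1) ∧
  (∀ φ, CC (∅ : Set (Sentence V)) φ → P φ = 1) ∧
  (∀ φ ψ, CC (∅ : Set (Sentence V)) (.neg (.conj φ ψ)) →
    P (.disj φ ψ) = P φ + P ψ)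

/-- The literal on `p` prescribed by the valuation `v`. -/
def litOf (v : V → Bool) (p : V) : Sentence V :=
  if v p then .var p else .neg (.var p)

/-- Left-associated conjunction `φ ∧ ψ₁ ∧ ⋯ ∧ ψₙ`. -/
def listConj : Sentence V → List (Sentence V) → Sentence V
  | φ, [] => φ
  | φ, ψ :: l => listConj (.conj φ ψ) l

/-- Left-associated disjunction `φ ∨ ψ₁ ∨ ⋯ ∨ ψₙ`. -/
def listDisj : Sentence V → List (Sentence V) → Sentence V
  | φ, [] => φ
  | φ, ψ :: l => listDisj (.disj φ ψ) l

/-- Conjunction of a list of sentences (`⊥` for the empty list, which is never used). -/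
def conjList : List (Sentence V) → Sentence V
  | [] => .bot
  | ψ :: l => listConj ψ l

/-- Disjunction of a list of sentences (`⊥` for the empty list, which is never used). -/
def disjList : List (Sentence V) → Sentence V
  | [] => .bot
  | ψ :: l => listDisj ψ l

/-- `α` is an atom of the language: a maximal (classically consistent) conjunction of
literals, with exactly one literal per propositional variable. -/
def IsAtom (α : Sentence V) : Prop :=
  ∃ (v : V → Bool) (l : List V), l.Nodup ∧ (∀ p : V, p ∈ l) ∧ l ≠ [] ∧
    α = conjList (l.map (litOf v))

/-- The conjunction `⋀_{i ∈ S} φ_i` of a finite set of indexed sentences. -/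
def finsetConj {n : ℕ} (φ : Fin n → Sentence V) (S : Finset (Fin n)) : Sentence V :=
  conjList ((S.sort (· ≤ ·)).map φ)

/-- The finite set of subsentences of a sentence. -/
def subsF [DecidableEq V] : Sentence V → Finset (Sentence V)
  | .var p => {Sentence.var p}
  | .bot => {Sentence.bot}
  | .neg φ => insert (.neg φ) (subsF φ)
  | .conj φ ψ => insert (.conj φ ψ) (subsF φ ∪ subsF ψ)
  | .disj φ ψ => insert (.disj φ ψ) (subsF φ ∪ subsF ψ)

/-- All branching sentences of the tree belong to `S`. -/
def BranchesIn [DecidableEq V] : DBTree V → Finset (Sentence V) → Prop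
  | .leaf, _ => True
  | .node β t₁ t₂, S => β ∈ S ∧ BranchesIn t₁ S ∧ BranchesIn t₂ S


/-! ### Auxiliary lemmas -/

theorem der0_sound {Γ : Set (Sentence V)} {φ} (h : Der0 Γ φ) :
    ∀ v : V → Bool, (∀ γ ∈ Γ, eval v γ = true) → eval v φ = true := by
  induction h with
  | prem h => exact fun v hv => hv _ h
  | andI h1 h2 ih1 ih2 => intro v hv; simp [eval, ih1 v hv, ih2 v hv]
  | andE1 h ih => intro v hv; have := ih v hv; simp [eval] at this; exact this.1
  | andE2 h ih => intro v hv; have := ih v hv; simp [eval] at this; exact this.2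
  | orI1 h ih => intro v hv; simp [eval, ih v hv]
  | orI2 h ih => intro v hv; simp [eval, ih v hv]
  | orE1 h1 h2 ih1 ih2 =>
      intro v hv; have a := ih1 v hv; have b := ih2 v hv
      simp [eval] at a b ⊢; simp_all
  | orE2 h1 h2 ih1 ih2 =>
      intro v hv; have a := ih1 v hv; have b := ih2 v hv
      simp [eval] at a b ⊢; simp_all
  | negAndI1 h ih => intro v hv; have := ih v hv; simp [eval] at this ⊢; tauto
  | negAndI2 h ih => intro v hv; have := ih v hv; simp [eval] at this ⊢; tauto
  | negAndE1 h1 h2 ih1 ih2 =>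
      intro v hv; have a := ih1 v hv; have b := ih2 v hv
      simp [eval] at a b ⊢; simp_all
  | negAndE2 h1 h2 ih1 ih2 =>
      intro v hv; have a := ih1 v hv; have b := ih2 v hv
      simp [eval] at a b ⊢; simp_all
  | negOrI h1 h2 ih1 ih2 =>
      intro v hv; have a := ih1 v hv; have b := ih2 v hv
      simp [eval] at a b ⊢; tauto
  | negOrE1 h ih => intro v hv; have := ih v hv; simp [eval] at this ⊢; tauto
  | negOrE2 h ih => intro v hv; have := ih v hv; simp [eval] at this ⊢; tauto
  | dnI h ih => intro v hv; have := ih v hv; simp [eval] at this ⊢; tauto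
  | dnE h ih => intro v hv; have := ih v hv; simp [eval] at this ⊢; tauto
  | botI h1 h2 ih1 ih2 =>
      intro v hv; have a := ih1 v hv; have b := ih2 v hv
      simp [eval] at a b ⊢; simp_all
  | botE h ih => intro v hv; have := ih v hv; simp [eval] at this

theorem der0_cut {Δ Γ : Set (Sentence V)} {φ} (h : Der0 Δ φ)
    (hs : ∀ δ ∈ Δ, Der0 Γ δ) : Der0 Γ φ := by
  induction h with
  | prem h => exact hs _ h
  | andI _ _ ih1 ih2 => exact .andI ih1 ih2
  | andE1 _ ih => exact .andE1 ih
  | andE2 _ ih => exact .andE2 ih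
  | orI1 _ ih => exact .orI1 ih
  | orI2 _ ih => exact .orI2 ih
  | orE1 _ _ ih1 ih2 => exact .orE1 ih1 ih2
  | orE2 _ _ ih1 ih2 => exact .orE2 ih1 ih2
  | negAndI1 _ ih => exact .negAndI1 ih
  | negAndI2 _ ih => exact .negAndI2 ih
  | negAndE1 _ _ ih1 ih2 => exact .negAndE1 ih1 ih2
  | negAndE2 _ _ ih1 ih2 => exact .negAndE2 ih1 ih2
  | negOrI _ _ ih1 ih2 => exact .negOrI ih1 ih2
  | negOrE1 _ ih => exact .negOrE1 ih
  | negOrE2 _ ih => exact .negOrE2 ih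
  | dnI _ ih => exact .dnI ih
  | dnE _ ih => exact .dnE ih
  | botI _ _ ih1 ih2 => exact .botI ih1 ih2
  | botE _ ih => exact .botE ih

theorem der0_mono {Γ Γ' : Set (Sentence V)} {φ} (h : Der0 Γ φ) (hs : Γ ⊆ Γ') :
    Der0 Γ' φ :=
  der0_cut h (fun _ hδ => .prem (hs hδ))

theorem subsSet_mono {Γ Γ' : Set (Sentence V)} (hs : Γ ⊆ Γ') :
    subsSet Γ ⊆ subsSet Γ' :=
  Set.biUnion_subset_biUnion_left hs

theorem subsSet_insert (a : Sentence V) (Γ : Set (Sentence V)) :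
    subsSet (insert a Γ) = subs a ∪ subsSet Γ := by
  simp [subsSet, Set.biUnion_insert]

theorem derK_mono : ∀ {k : ℕ} {Γ Γ' : Set (Sentence V)} {φ},
    DerK k Γ φ → Γ ⊆ Γ' → DerK k Γ' φ := by
  intro k
  induction k with
  | zero => exact fun h hs => der0_mono h hs
  | succ k ih =>
      rintro Γ Γ' φ ⟨β, hβ, h1, h2⟩ hs
      exact ⟨β, subsSet_mono (Set.insert_subset_insert hs) hβ,
        ih h1 (Set.insert_subset_insert hs), ih h2 (Set.insert_subset_insert hs)⟩

theorem derK_sound : ∀ {k : ℕ} {Γ : Set (Sentence V)} {φ}, DerK k Γ φ → CC Γ φ := by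
  intro k
  induction k with
  | zero => exact fun h v hv => der0_sound h v hv
  | succ k ih =>
      rintro Γ φ ⟨β, _, h1, h2⟩ v hv
      by_cases hβ : eval v β = true
      · refine ih h1 v ?_
        rintro γ (rfl | hγ)
        · exact hβ
        · exact hv _ hγ
      · refine ih h2 v ?_
        rintro γ (rfl | hγ)
        · simp [eval, Bool.not_eq_true] at hβ ⊢; exact hβ
        · exact hv _ hγ

theorem derK_congr {φ : Sentence V} : ∀ {k : ℕ} {Γ Γ' : Set (Sentence V)},
    (∀ δ ∈ Γ, Der0 Γ' δ) → (∀ δ ∈ Γ', Der0 Γ δ) →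
    subsSet Γ ⊆ subsSet (insert φ Γ') → DerK k Γ φ → DerK k Γ' φ := by
  intro k
  induction k with
  | zero => exact fun h1 _ _ h => der0_cut h h1
  | succ k ih =>
      rintro Γ Γ' h1 h2 h3 ⟨β, hβ, d1, d2⟩
      have h3' : subsSet Γ ⊆ subs φ ∪ subsSet Γ' := by
        rw [← subsSet_insert]; exact h3
      have hβ' : β ∈ subsSet (insert φ Γ') := by
        rw [subsSet_insert] at hβ ⊢
        rcases hβ with hβ | hβ
        · exact Or.inl hβ
        · exact h3' hβ
      have key : ∀ δ : Sentence V, DerK k (insert δ Γ) φ → DerK k (insert δ Γ') φ := by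
        intro δ hd
        refine ih ?_ ?_ ?_ hd
        · intro x hx
          rcases Set.mem_insert_iff.mp hx with rfl | hx
          · exact .prem (Set.mem_insert _ _)
          · exact der0_mono (h1 _ hx) (Set.subset_insert _ _)
        · intro x hx
          rcases Set.mem_insert_iff.mp hx with rfl | hx
          · exact .prem (Set.mem_insert _ _)
          · exact der0_mono (h2 _ hx) (Set.subset_insert _ _)
        · rw [subsSet_insert, subsSet_insert, subsSet_insert]
          rintro x (hx | hx)
          · exact Or.inr (Or.inl hx)
          · rcases h3' hx with hx' | hx'
            · exact Or.inl hx'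
            · exact Or.inr (Or.inr hx')
      exact ⟨β, hβ', key β d1, key (.neg β) d2⟩

/-! ### Tree auxiliary machinery -/

/-- A tree is complete of depth exactly `n`. -/
def Complete : ℕ → DBTree V → Prop
  | 0, .leaf => True
  | 0, .node _ _ _ => False
  | _+1, .leaf => False
  | n+1, .node _ a b => Complete n a ∧ Complete n b

/-- Expand every leaf with branching sentence ⊥. -/
def growAll : DBTree V → DBTree V
  | .leaf => .node .bot .leaf .leaf
  | .node β a b => .node β (growAll a) (growAll b)

/-- Truncation of a tree to depth `n`. -/
def truncT : ℕ → DBTree V → DBTree V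
  | 0, _ => .leaf
  | _+1, .leaf => .leaf
  | n+1, .node β a b => .node β (truncT n a) (truncT n b)

/-- Depth at most `n`. -/
def DepthLE : ℕ → DBTree V → Prop
  | _, .leaf => True
  | 0, .node _ _ _ => False
  | n+1, .node _ a b => DepthLE n a ∧ DepthLE n b

theorem complete_growAll : ∀ {n : ℕ} {t : DBTree V}, Complete n t →
    Complete (n+1) (growAll t)
  | 0, .leaf, _ => ⟨trivial, trivial⟩
  | n+1, .node _ a b, h => ⟨complete_growAll h.1, complete_growAll h.2⟩

theorem complete_iter {n : ℕ} {t : DBTree V} (h : Complete n t) :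
    ∀ m : ℕ, Complete (n+m) (growAll^[m] t) := by
  intro m
  induction m with
  | zero => exact h
  | succ m ih =>
      rw [Function.iterate_succ_apply']
      exact complete_growAll ih

theorem trunc_eq_of_complete : ∀ {n : ℕ} {t : DBTree V}, Complete n t →
    truncT n t = t
  | 0, .leaf, _ => rfl
  | n+1, .node β a b, h => by
      simp only [truncT, trunc_eq_of_complete h.1, trunc_eq_of_complete h.2]

theorem trunc_growAll : ∀ {n m : ℕ} {t : DBTree V}, Complete m t → n ≤ m →
    truncT n (growAll t) = truncT n t
  | 0, _, _, _, _ => rfl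
  | n+1, m+1, .node β a b, h, hle => by
      simp only [growAll, truncT, trunc_growAll h.1 (Nat.succ_le_succ_iff.mp hle),
        trunc_growAll h.2 (Nat.succ_le_succ_iff.mp hle)]

theorem grow_trunc : ∀ {n m : ℕ} {t : DBTree V}, Complete m t → n ≤ m →
    Grow n (truncT n t) (truncT (n+1) (growAll t))
  | 0, 0, .leaf, _, _ => Grow.expand _
  | 0, m+1, .node β a b, _, _ => Grow.expand β
  | n+1, m+1, .node β a b, h, hle =>
      Grow.node β (grow_trunc h.1 (Nat.succ_le_succ_iff.mp hle))
        (grow_trunc h.2 (Nat.succ_le_succ_iff.mp hle))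

theorem complete_trunc : ∀ {n m : ℕ} {t : DBTree V}, Complete m t → n ≤ m →
    Complete n (truncT n t)
  | 0, _, _, _, _ => trivial
  | n+1, m+1, .node β a b, h, hle =>
      ⟨complete_trunc h.1 (Nat.succ_le_succ_iff.mp hle),
       complete_trunc h.2 (Nat.succ_le_succ_iff.mp hle)⟩

theorem numLeaves_complete : ∀ {n : ℕ} {t : DBTree V}, Complete n t →
    numLeaves t = 2 ^ n
  | 0, .leaf, _ => rfl
  | n+1, .node β a b, h => by
      simp only [numLeaves, numLeaves_complete h.1, numLeaves_complete h.2, pow_succ]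
      ring

theorem trunc_iter_eq {k : ℕ} {t : DBTree V} (h : Complete k t) :
    ∀ n : ℕ, truncT k (growAll^[n] t) = t := by
  intro n
  induction n with
  | zero => exact trunc_eq_of_complete h
  | succ n ih =>
      rw [Function.iterate_succ_apply',
        trunc_growAll (complete_iter h n) (Nat.le_add_right _ _), ih]

theorem grow_depthLE : ∀ {n : ℕ} {t t' : DBTree V}, Grow n t t' → DepthLE (n+1) t' := by
  intro n t t' h
  induction h with
  | keep k => trivial
  | expand β => exact ⟨trivial, trivial⟩
  | node β _ _ ih1 ih2 => exact ⟨ih1, ih2⟩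

theorem numLeaves_le_of_depthLE : ∀ {n : ℕ} {t : DBTree V}, DepthLE n t →
    numLeaves t ≤ 2 ^ n
  | _, .leaf, _ => Nat.one_le_two_pow
  | n+1, .node β a b, h => by
      have := numLeaves_le_of_depthLE h.1
      have := numLeaves_le_of_depthLE h.2
      simp only [numLeaves, pow_succ]
      omega

/-- A DBT-sequence whose depth-`k` tree is any given complete depth-`k` tree. -/
theorem isDepthKTree_of_complete {k : ℕ} {t : DBTree V} (h : Complete k t) :
    IsDepthKTree k t := by
  refine ⟨⟨fun n => truncT n (growAll^[n] t), rfl, ?_, ?_⟩, trunc_iter_eq h k⟩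
  · intro n
    rw [Function.iterate_succ_apply']
    exact grow_trunc (complete_iter h n) (Nat.le_add_left _ _)
  · intro n heq
    have h1 : Complete (n+1) (truncT (n+1) (growAll^[n+1] t)) :=
      complete_trunc (complete_iter h (n+1)) (Nat.le_add_left _ _)
    have h2 : Complete n (truncT n (growAll^[n] t)) :=
      complete_trunc (complete_iter h n) (Nat.le_add_left _ _)
    rw [heq] at h1
    have e1 := numLeaves_complete h1
    have e2 := numLeaves_complete h2
    rw [e2] at e1
    have : (2:ℕ)^n < 2^(n+1) := Nat.pow_lt_pow_right one_lt_two (Nat.lt_succ_self n)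
    omega

/-! ### Leaf labels: distinctness and counting -/

/-- Size of a sentence. -/
def sz : Sentence V → ℕ
  | .var _ => 1
  | .bot => 1
  | .neg φ => sz φ + 1
  | .conj φ ψ => sz φ + sz ψ + 1
  | .disj φ ψ => sz φ + sz ψ + 1

/-- `x` is reachable from `σ` by iterated left projections of conjunctions. -/
inductive InL (x : Sentence V) : Sentence V → Prop
  | refl : InL x x
  | left {a b : Sentence V} : InL x a → InL x (.conj a b)

theorem InL.sz_le {x σ : Sentence V} (h : InL x σ) : sz x ≤ sz σ := by
  induction h with
  | refl => exact le_refl _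
  | left _ ih => simp only [sz]; omega

theorem InL.trans {x y z : Sentence V} (h1 : InL x y) (h2 : InL y z) : InL x z := by
  induction h2 with
  | refl => exact h1
  | left _ ih => exact .left ih

theorem InL.inv_neg {y b : Sentence V} (h : InL y (.neg b)) : y = .neg b := by
  cases h; rfl

theorem InL.inv_conj {y a b : Sentence V} (h : InL y (.conj a b)) :
    y = .conj a b ∨ InL y a := by
  cases h with
  | refl => exact Or.inl rfl
  | left h => exact Or.inr h

theorem InL.linear {x y σ : Sentence V} (hx : InL x σ) (hy : InL y σ) :
    InL x y ∨ InL y x := by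
  induction hx with
  | refl => exact Or.inr hy
  | @left a b h ih =>
      rcases hy.inv_conj with rfl | hy'
      · exact Or.inl (.left h)
      · exact ih hy'

theorem mem_leafLabels_some [DecidableEq V] :
    ∀ {t : DBTree V} {α : Sentence V} {s : Option (Sentence V)},
    s ∈ leafLabels (some α) t → ∃ σ, s = some σ ∧ InL α σ := by
  intro t
  induction t with
  | leaf =>
      intro α s hs
      simp only [leafLabels, Finset.mem_singleton] at hs
      exact ⟨α, hs, .refl⟩
  | node β t1 t2 ih1 ih2 =>
      intro α s hs
      simp only [leafLabels, Finset.mem_union] at hs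
      rcases hs with hs | hs
      · obtain ⟨σ, rfl, hσ⟩ := ih1 hs
        exact ⟨σ, rfl, (InL.left (b := β) .refl).trans hσ⟩
      · obtain ⟨σ, rfl, hσ⟩ := ih2 hs
        exact ⟨σ, rfl, (InL.left (b := .neg β) .refl).trans hσ⟩

theorem not_inL_both {α β γ : Sentence V} (hne : β ≠ γ) {σ : Sentence V}
    (h1 : InL (.conj α β) σ) (h2 : InL (.conj α γ) σ) : False := by
  rcases h1.linear h2 with h | h
  · rcases h.inv_conj with he | h'
    · exact hne (by injection he with e1 e2)
    · have := h'.sz_le; simp only [sz] at this; omega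
  · rcases h.inv_conj with he | h'
    · exact hne (by injection he with e1 e2; exact e2.symm)
    · have := h'.sz_le; simp only [sz] at this; omega

theorem disjoint_leafLabels_conj [DecidableEq V] {α β γ : Sentence V} (hne : β ≠ γ)
    (t1 t2 : DBTree V) :
    Disjoint (leafLabels (some (.conj α β)) t1) (leafLabels (some (.conj α γ)) t2) := by
  rw [Finset.disjoint_left]
  intro s hs1 hs2
  obtain ⟨σ, rfl, h1⟩ := mem_leafLabels_some hs1
  obtain ⟨σ', he, h2⟩ := mem_leafLabels_some hs2
  rw [Option.some.injEq] at he; subst he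
  exact not_inL_both hne h1 h2

theorem sz_ne_neg (β : Sentence V) : β ≠ .neg β := by
  intro h
  have : sz β = sz (Sentence.neg β) := by rw [← h]
  simp only [sz] at this; omega

theorem disjoint_leafLabels_neg [DecidableEq V] {β : Sentence V} (t1 t2 : DBTree V) :
    Disjoint (leafLabels (some β) t1) (leafLabels (some (.neg β)) t2) := by
  rw [Finset.disjoint_left]
  intro s hs1 hs2
  obtain ⟨σ, rfl, h1⟩ := mem_leafLabels_some hs1
  obtain ⟨σ', he, h2⟩ := mem_leafLabels_some hs2
  rw [Option.some.injEq] at he; subst he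
  rcases h1.linear h2 with h | h
  · exact sz_ne_neg β h.inv_neg
  · have := h.sz_le; simp only [sz] at this; omega

theorem card_leafLabels_some [DecidableEq V] :
    ∀ (t : DBTree V) (α : Sentence V),
    (leafLabels (some α) t).card = numLeaves t := by
  intro t
  induction t with
  | leaf => intro α; simp [leafLabels, numLeaves]
  | node β t1 t2 ih1 ih2 =>
      intro α
      simp only [leafLabels, numLeaves, extend]
      rw [Finset.card_union_of_disjoint (disjoint_leafLabels_conj (sz_ne_neg β) t1 t2),
        ih1, ih2]

theorem card_leafLabels [DecidableEq V] :
    ∀ (r : Option (Sentence V)) (t : DBTree V),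
    (leafLabels r t).card = numLeaves t := by
  intro r t
  cases r with
  | some α => exact card_leafLabels_some t α
  | none =>
      cases t with
      | leaf => simp [leafLabels, numLeaves]
      | node β t1 t2 =>
          simp only [leafLabels, numLeaves, extend]
          rw [Finset.card_union_of_disjoint (disjoint_leafLabels_neg t1 t2),
            card_leafLabels_some, card_leafLabels_some]

theorem card_leafLabels_le [DecidableEq V] :
    ∀ (t : DBTree V) (r : Option (Sentence V)),
    (leafLabels r t).card ≤ numLeaves t := by
  intro t r
  exact le_of_eq (card_leafLabels r t)

theorem decCount_le_card [DecidableEq V] (Γ : Finset (Option (Sentence V)))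
    (φ : Sentence V) : decCount Γ φ ≤ Γ.card := by
  classical
  unfold decCount
  exact Finset.card_filter_le _ _

theorem decCount_eq_card_of_all [DecidableEq V] {Γ : Finset (Option (Sentence V))}
    {φ : Sentence V} (h : ∀ α ∈ Γ, Decides α φ) : decCount Γ φ = Γ.card := by
  classical
  unfold decCount
  rw [Finset.filter_true_of_mem h]

theorem all_decides_of_decCount_eq_card [DecidableEq V]
    {Γ : Finset (Option (Sentence V))} {φ : Sentence V}
    (h : decCount Γ φ = Γ.card) : ∀ α ∈ Γ, Decides α φ := by
  classical
  unfold decCount at h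
  intro α hα
  have hsub := Finset.filter_subset (fun α => Decides α φ) Γ
  have : Finset.filter (fun α => Decides α φ) Γ = Γ :=
    Finset.eq_of_subset_of_card_le hsub (le_of_eq h.symm)
  rw [← this] at hα
  exact (Finset.mem_filter.mp hα).2

theorem subsSet_singleton (a : Sentence V) : subsSet ({a} : Set (Sentence V)) = subs a := by
  simp [subsSet]

/-- Moving a premise into the conjunction label. -/
theorem derK_extend {φ : Sentence V} {k : ℕ} {r : Option (Sentence V)} {δ : Sentence V}
    (h : DerK k (insert δ (prems r)) φ) : DerK k (prems (extend r δ)) φ := by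
  cases r with
  | none =>
      have : insert δ (prems (none : Option (Sentence V))) = prems (extend none δ) := by
        simp [prems, extend]
      rwa [this] at h
  | some α =>
      refine derK_congr ?_ ?_ ?_ h
      · intro x hx
        rcases Set.mem_insert_iff.mp hx with rfl | hx
        · exact .andE2 (.prem rfl)
        · rw [show prems (some α) = ({α} : Set (Sentence V)) from rfl,
            Set.mem_singleton_iff] at hx
          subst hx
          exact .andE1 (.prem rfl)
      · intro x hx
        rw [show prems (extend (some α) δ) = {Sentence.conj α δ} from rfl,
          Set.mem_singleton_iff] at hx
        subst hx
        exact .andI (.prem (Set.mem_insert_iff.mpr (Or.inr rfl)))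
          (.prem (Set.mem_insert _ _))
      · rw [subsSet_insert, show prems (some α) = ({α} : Set (Sentence V)) from rfl,
          subsSet_singleton,
          show prems (extend (some α) δ) = {Sentence.conj α δ} from rfl,
          subsSet_insert, subsSet_singleton]
        rintro x (hx | hx)
        · exact Or.inr (Set.mem_insert_iff.mpr (Or.inr (Or.inr hx)))
        · exact Or.inr (Set.mem_insert_iff.mpr (Or.inr (Or.inl hx)))

/-- From a k-depth derivation, build a complete depth-k tree all of whose
leaves 0-derive `φ`. -/
theorem build [DecidableEq V] {φ : Sentence V} :
    ∀ (k : ℕ) (r : Option (Sentence V)), DerK k (prems r) φ →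
    ∃ t : DBTree V, Complete k t ∧ ∀ s ∈ leafLabels r t, Der0O s φ := by
  intro k
  induction k with
  | zero =>
      intro r h
      refine ⟨.leaf, trivial, ?_⟩
      intro s hs
      rw [show leafLabels r DBTree.leaf = {r} from rfl, Finset.mem_singleton] at hs
      subst hs
      exact h
  | succ k ih =>
      rintro r ⟨β, _, h1, h2⟩
      obtain ⟨t1, hc1, hl1⟩ := ih (extend r β) (derK_extend h1)
      obtain ⟨t2, hc2, hl2⟩ := ih (extend r (.neg β)) (derK_extend h2)
      refine ⟨.node β t1 t2, ⟨hc1, hc2⟩, ?_⟩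
      intro s hs
      simp only [leafLabels, Finset.mem_union] at hs
      rcases hs with hs | hs
      · exact hl1 s hs
      · exact hl2 s hs

theorem dbf_depthLE (F : DBFSeq V) {γ : Option (Sentence V)} (hγ : γ ∈ F.Supp) :
    ∀ k : ℕ, DepthLE k (F.tree γ k) := by
  intro k
  cases k with
  | zero => rw [F.init γ hγ]; trivial
  | succ k => exact grow_depthLE (F.grow γ hγ k)

/-- Key closure lemma: in a `{φ}`-maximal depth-`k` tree, if `γ ⊢ₖ φ` then every
leaf decides `φ`. -/
theorem all_leaves_decide [DecidableEq V] {φ : Sentence V} {k : ℕ}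
    {γ : Option (Sentence V)} {t : DBTree V} (hd : DepthLE k t)
    (hmax : TreeMaximal γ k t φ) (hder : DerK k (prems γ) φ) :
    ∀ α ∈ leafLabels γ t, Decides α φ := by
  obtain ⟨t', hc, hl⟩ := build k γ hder
  have h1 : decCount (leafLabels γ t') φ = 2 ^ k := by
    rw [decCount_eq_card_of_all (fun α hα => Or.inl (hl α hα)), card_leafLabels,
      numLeaves_complete hc]
  have h2 := hmax t' (isDepthKTree_of_complete hc)
  have h3 : decCount (leafLabels γ t) φ ≤ (leafLabels γ t).card :=
    decCount_le_card _ _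
  have h4 : (leafLabels γ t).card ≤ 2 ^ k := by
    rw [card_leafLabels]; exact numLeaves_le_of_depthLE hd
  exact all_decides_of_decCount_eq_card (by omega)

/-- For a DBM-sequence `(F_k, m_k)` based on `Supp ⊆ SL ∪ {*}`, if `⊢ₖ φ`
(from the empty premise set) then `B_k(φ) = 1`, provided `F_k` is `{φ}`-maximal and free of
deep contradictions. -/
theorem belief_one_of_derK {V : Type} [DecidableEq V] [Fintype V]
    (M : DBMSeq V) (k : ℕ) (φ : Sentence V)
    (h : DerK k (∅ : Set (Sentence V)) φ)
    (hmax : M.toDBFSeq.Maximal k φ) (hfree : M.toDBFSeq.FreeDC k) :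
    M.B k φ = 1 := by
  classical
  have taut : ∀ v : V → Bool, eval v φ = true := by
    intro v
    exact derK_sound h v (by simp)
  have hkey : ∀ α ∈ M.toDBFSeq.leaves k, ¬ Der0O α Sentence.bot → Der0O α φ := by
    intro α hα hbot
    unfold DBFSeq.leaves at hα
    rw [Finset.mem_biUnion] at hα
    obtain ⟨γ, hγ, hαγ⟩ := hα
    have hdec : Decides α φ :=
      all_leaves_decide (dbf_depthLE M.toDBFSeq hγ k) (hmax γ hγ)
        (derK_mono h (Set.empty_subset _)) α hαγ
    rcases hdec with hd | hd
    · exact hd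
    · exfalso
      apply hbot
      apply M.freeDC k γ hγ α hαγ
      intro v hv
      have := der0_sound hd v hv
      simp [eval, taut v] at this
  have hsum : M.B k φ = ∑ α ∈ M.toDBFSeq.leaves k, M.m k α := by
    unfold DBMSeq.B
    refine Finset.sum_congr rfl ?_
    intro α hα
    by_cases hbot : Der0O α Sentence.bot
    · rw [if_neg (fun hc => hc.2 hbot), M.incZero k α hα hbot]
    · rw [if_pos ⟨hkey α hα hbot, hbot⟩]
  rw [hsum, M.total k]

end DBB
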